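/- Upper bound on winning probability: in the K-stage coupon lottery with M participants whose coupon counts all lie in [r_min, r_max] with 0 < r_min ≤ r_max, the probability that agent 1 wins satisfies p_win ≤ 1 − (M−K)/M · (r_min/r_max)^K, regardless of the action distribution of the opponents. -/

import Mathlib

/-- Probability that an agent with coupon count `r` fails to be among the first `K`
winners of a Plackett-Luce lottery against opponents with coupon counts `opp`. -/
noncomputable def lossProb (r : ℝ) : ℕ → List ℝ → ℝ
  | 0, _ => 1
  | K + 1, opp =>
      ∑ i ∈ Finset.range opp.length,
        (opp.getD i 0 / (r + opp.sum)) * lossProb r K (opp.eraseIdx i)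

/-!
Every opponent holds at least `q * r` coupons, where `q = rmin / rmax`, so with `n` opponents
left the first draw goes to an opponent with probability `S / (r + S) ≥ q * n / (n + 1)`.
After such a draw `n - 1` opponents remain, and by induction on the number of stages agent 1
loses with probability at least `(n + 1 - K) / (n + 1) * q ^ K`: the factors `(n - j) / (n + 1 - j)`
telescope.
-/

theorem List.sum_range_getD_zero {M : Type*} [AddCommMonoid M] (l : List M) :
    ∑ i ∈ Finset.range l.length, l.getD i 0 = l.sum := by
  rw [Finset.sum_range, ← Fin.sum_univ_getElem]
  exact Finset.sum_congr rfl fun i _ => List.getD_eq_getElem _ _ i.2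

theorem sum_mul_le_lossProb_succ {r b : ℝ} {K : ℕ} {opp : List ℝ} (hr : 0 ≤ r)
    (hopp : ∀ c ∈ opp, 0 ≤ c) (hb : ∀ i < opp.length, b ≤ lossProb r K (opp.eraseIdx i)) :
    opp.sum / (r + opp.sum) * b ≤ lossProb r (K + 1) opp := by
  have hS : 0 ≤ opp.sum := List.sum_nonneg hopp
  calc opp.sum / (r + opp.sum) * b
      = ∑ i ∈ Finset.range opp.length, opp.getD i 0 / (r + opp.sum) * b := by
        rw [← Finset.sum_mul, ← Finset.sum_div, List.sum_range_getD_zero]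
    _ ≤ lossProb r (K + 1) opp := by
        refine Finset.sum_le_sum fun i hi => ?_
        have hi : i < opp.length := Finset.mem_range.mp hi
        have hc : 0 ≤ opp.getD i 0 := by
          rw [List.getD_eq_getElem _ _ hi]; exact hopp _ (List.getElem_mem hi)
        exact mul_le_mul_of_nonneg_left (hb i hi) (by positivity)

theorem mul_div_add_one_le_div_add {q r S n : ℝ} (hq0 : 0 ≤ q) (hq1 : q ≤ 1) (hr : 0 < r)
    (hn : 0 ≤ n) (hS : n * (q * r) ≤ S) :
    q * n / (n + 1) ≤ S / (r + S) := by
  have hS0 : 0 ≤ S := le_trans (by positivity) hS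
  rw [div_le_div_iff₀ (by positivity) (by positivity)]
  nlinarith [mul_le_mul_of_nonneg_left hq1 (mul_nonneg hn hS0)]

theorem le_lossProb {q r : ℝ} (hq0 : 0 ≤ q) (hq1 : q ≤ 1) (hr : 0 < r) (K : ℕ)
    (opp : List ℝ) (hK : K ≤ opp.length) (hopp : ∀ c ∈ opp, q * r ≤ c) :
    (opp.length + 1 - K : ℝ) / (opp.length + 1) * q ^ K ≤ lossProb r K opp := by
  induction K generalizing opp with
  | zero =>
    rw [lossProb, pow_zero, mul_one, Nat.cast_zero, sub_zero, div_self (by positivity)]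
  | succ K ih =>
    set n := opp.length
    have hn : (n : ℝ) ≠ 0 := Nat.cast_ne_zero.mpr (by omega)
    have herase : ∀ i < n, (n - K : ℝ) / n * q ^ K ≤ lossProb r K (opp.eraseIdx i) := by
      intro i hi
      have hlen : ((opp.eraseIdx i).length : ℝ) + 1 = n := by
        rw [List.length_eraseIdx_of_lt hi, Nat.cast_pred (by omega), sub_add_cancel]
      have := ih (opp.eraseIdx i) (by rw [List.length_eraseIdx_of_lt hi]; omega)
        fun c hc => hopp c ((List.eraseIdx_sublist opp i).subset hc)
      rwa [hlen] at this
    have hshare : q * n / (n + 1) ≤ opp.sum / (r + opp.sum) :=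
      mul_div_add_one_le_div_add hq0 hq1 hr n.cast_nonneg
        (by simpa using List.card_nsmul_le_sum opp (q * r) hopp)
    have hKn : (K : ℝ) + 1 ≤ n := by exact_mod_cast hK
    calc (n + 1 - (K + 1 : ℕ) : ℝ) / (n + 1) * q ^ (K + 1)
        = (n - K : ℝ) / n * q ^ K * (q * n / (n + 1)) := by
          push_cast; field_simp; ring
      _ ≤ (n - K : ℝ) / n * q ^ K * (opp.sum / (r + opp.sum)) := by
          have : (0 : ℝ) ≤ n - K := by linarith
          gcongr
      _ ≤ lossProb r (K + 1) opp := by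
          rw [mul_comm]
          exact sum_mul_le_lossProb_succ hr.le
            (fun c hc => le_trans (by positivity) (hopp c hc)) herase

/-- Upper bound on the winning probability: if all `M` coupon counts lie in
`[rmin, rmax]` with `0 < rmin ≤ rmax`, then agent 1's probability of being among the
first `K` winners (`K < M`) is at most `1 - (M-K)/M * (rmin/rmax)^K`. -/
theorem winProb_upper_bound (M K : ℕ) (hK : K < M) (rmin rmax r : ℝ)
    (h0 : 0 < rmin) (hmm : rmin ≤ rmax) (opp : List ℝ) (hlen : opp.length = M - 1)
    (hr : r ∈ Set.Icc rmin rmax) (hopp : ∀ c ∈ opp, c ∈ Set.Icc rmin rmax) :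
    1 - lossProb r K opp ≤ 1 - ((M - K : ℝ) / M) * (rmin / rmax) ^ K := by
  have hrmax : 0 < rmax := h0.trans_le hmm
  have hratio : rmin / rmax * r ≤ rmin := by
    rw [div_mul_eq_mul_div, div_le_iff₀ hrmax]
    exact mul_le_mul_of_nonneg_left hr.2 h0.le
  have hM : (opp.length : ℝ) + 1 = M := by
    rw [hlen, Nat.cast_pred (by omega), sub_add_cancel]
  have h := le_lossProb (by positivity) (div_le_one_of_le₀ hmm hrmax.le) (h0.trans_le hr.1) K opp
    (by omega) fun c hc => hratio.trans (hopp c hc).1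
  rw [hM] at h
  linarith
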